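/- arXiv:math/0309045 — 3 statements merged into one kernel-verified Lean document; each statement's English description precedes it below -/
import Mathlib

section
/- Let B be a C*-algebra, let Y and Z be Hilbert C*-modules over B, and let J be a closed two-sided ideal of B that contains ⟨y|y'⟩ for all y, y' ∈ Y. If u : Y → Z is a bounded ℂ-linear map satisfying u(y·j) = u(y)·j for all y ∈ Y and j ∈ J, then u(y·b) = u(y)·b for all y ∈ Y and b ∈ B. Consequently the bounded B-module maps from Y to Z coincide with the bounded ℂ-linear maps from Y to Z that are J-module maps. -/
/-!
For `y ∈ Y` let `a = ⟪y, y⟫ ∈ J` and, for `s > 0`, `j = f(a)` with `f(t) = t² / (s² + t²)`.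
Since `f(t) = t · t / (s² + t²)`, `j` is `a` times an element of `B`, so `j ∈ J`; and since `a ≥ 0`,
`‖y - y·j‖² = ‖(t (1 - f t)²)(a)‖ ≤ s / 2`. Hence `y` lies in the closure of `y·J`. On `y·J` the
continuous maps `x ↦ u(x·b)` and `x ↦ u(x)·b` agree because `J` is a right ideal, so they agree
at `y`.
-/

open scoped InnerProductSpace RightActions

/-- The notion of Hilbert C⋆-module of the older Mathlib (`CStarModule` of December 2024):
a right `A`-module (action of `Aᵐᵒᵖ`) with an `A`-valued inner product, linear on the right. -/
class RightCStarModule (A E : Type*) [NonUnitalSemiring A] [StarRing A]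
    [Module ℂ A] [AddCommGroup E] [Module ℂ E] [PartialOrder A] [SMul Aᵐᵒᵖ E] [Norm A] [Norm E]
    extends Inner A E where
  inner_add_right {x} {y} {z} : inner x (y + z) = inner x y + inner x z
  inner_self_nonneg {x} : 0 ≤ inner x x
  inner_self {x} : inner x x = 0 ↔ x = 0
  inner_op_smul_right {a : A} {x y : E} : inner x (y <• a) = inner x y * a
  inner_smul_right_complex {z : ℂ} {x} {y} : inner x (z • y) = z • inner x y
  star_inner x y : star (inner x y) = inner y x
  norm_eq_sqrt_norm_inner_self x : ‖x‖ = √‖inner x x‖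

namespace RightCStarModule

section Basic

variable {A E : Type*} [NonUnitalCStarAlgebra A] [PartialOrder A] [AddCommGroup E]
  [Module ℂ E] [SMul Aᵐᵒᵖ E] [Norm E] [RightCStarModule A E]

lemma inner_add_left {x y z : E} : ⟪x + y, z⟫_A = ⟪x, z⟫_A + ⟪y, z⟫_A := by
  rw [← star_inner, inner_add_right, star_add, star_inner, star_inner]

lemma inner_sub_right {x y z : E} : ⟪x, y - z⟫_A = ⟪x, y⟫_A - ⟪x, z⟫_A :=
  eq_sub_of_add_eq (by rw [← inner_add_right, sub_add_cancel])

lemma inner_sub_left {x y z : E} : ⟪x - y, z⟫_A = ⟪x, z⟫_A - ⟪y, z⟫_A :=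
  eq_sub_of_add_eq (by rw [← inner_add_left, sub_add_cancel])

lemma inner_op_smul_left {a : A} {x y : E} : ⟪x <• a, y⟫_A = star a * ⟪x, y⟫_A := by
  rw [← star_inner, inner_op_smul_right, star_mul, star_inner]

lemma isSelfAdjoint_inner_self (x : E) : IsSelfAdjoint ⟪x, x⟫_A := star_inner x x

lemma ext_inner_right {z z' : E} (h : ∀ w : E, ⟪w, z⟫_A = ⟪w, z'⟫_A) : z = z' := by
  rw [← sub_eq_zero, ← inner_self (A := A), inner_sub_right, h, sub_self]

lemma op_smul_op_smul (x : E) (a b : A) : (x <• a) <• b = x <• (a * b) :=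
  ext_inner_right (A := A) fun w => by simp only [inner_op_smul_right, mul_assoc]

lemma sub_op_smul (x y : E) (a : A) : (x - y) <• a = x <• a - y <• a :=
  ext_inner_right (A := A) fun w => by simp only [inner_op_smul_right, inner_sub_right, sub_mul]

lemma norm_sq_eq_norm_inner_self (x : E) : ‖x‖ ^ 2 = ‖⟪x, x⟫_A‖ := by
  rw [norm_eq_sqrt_norm_inner_self (A := A) x, Real.sq_sqrt (norm_nonneg _)]

lemma inner_sub_op_smul_cfcₙ_self (f : ℝ → ℝ) (hf : Continuous f) (hf0 : f 0 = 0) (x : E) :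
    ⟪x - x <• cfcₙ f ⟪x, x⟫_A, x - x <• cfcₙ f ⟪x, x⟫_A⟫_A =
      cfcₙ (fun t => t * (1 - f t) ^ 2) ⟪x, x⟫_A := by
  set a := ⟪x, x⟫_A
  have ha : IsSelfAdjoint a := isSelfAdjoint_inner_self x
  have hj : star (cfcₙ f a) = cfcₙ f a := (cfcₙ_predicate f a).star_eq
  have hfun : (fun t : ℝ => t * (1 - f t) ^ 2) =
      fun t => (t - f t * t) - (t - f t * t) * f t := by
    funext t; ring
  rw [hfun, cfcₙ_sub _ _ a (by fun_prop) (by simp [hf0]) (by fun_prop) (by simp [hf0]),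
    cfcₙ_mul _ f a (by fun_prop) (by simp [hf0]) hf.continuousOn hf0,
    cfcₙ_sub _ _ a (by fun_prop) (by simp) (by fun_prop) (by simp [hf0]),
    cfcₙ_mul f _ a hf.continuousOn hf0 (by fun_prop) (by simp), cfcₙ_id' ℝ a]
  simp only [inner_sub_left, inner_sub_right, inner_op_smul_left, inner_op_smul_right, hj]
  abel

end Basic

section Topology

variable {A E : Type*} [NonUnitalCStarAlgebra A] [PartialOrder A] [NormedAddCommGroup E]
  [Module ℂ E] [SMul Aᵐᵒᵖ E] [RightCStarModule A E]

lemma norm_op_smul_le (x : E) (a : A) : ‖x <• a‖ ≤ ‖x‖ * ‖a‖ := by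
  refine (pow_le_pow_iff_left₀ (norm_nonneg _) (by positivity) two_ne_zero).mp ?_
  calc ‖x <• a‖ ^ 2 = ‖star a * (⟪x, x⟫_A * a)‖ := by
        rw [norm_sq_eq_norm_inner_self (A := A), inner_op_smul_left, inner_op_smul_right]
    _ ≤ ‖star a‖ * (‖⟪x, x⟫_A‖ * ‖a‖) :=
        (norm_mul_le _ _).trans (mul_le_mul_of_nonneg_left (norm_mul_le _ _) (norm_nonneg _))
    _ = (‖x‖ * ‖a‖) ^ 2 := by rw [norm_star, ← norm_sq_eq_norm_inner_self (A := A)]; ring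

lemma lipschitzWith_op_smul (a : A) : LipschitzWith ‖a‖₊ fun x : E => x <• a :=
  LipschitzWith.of_dist_le_mul fun x y => by
    rw [dist_eq_norm, dist_eq_norm, ← sub_op_smul, mul_comm]
    exact norm_op_smul_le (A := A) _ _

lemma continuous_op_smul (a : A) : Continuous fun x : E => x <• a :=
  (lipschitzWith_op_smul a).continuous

end Topology

end RightCStarModule

/-- Through functional calculus, `approxUnitFun s` turns `a ≥ 0` into an approximate unit for `a`
as `s → 0`, lying in every ideal that contains `a`. -/
noncomputable def approxUnitFun (s t : ℝ) : ℝ := t ^ 2 / (s ^ 2 + t ^ 2)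

lemma approxUnitFun_zero_right (s : ℝ) : approxUnitFun s 0 = 0 := by
  simp [approxUnitFun]

lemma continuous_approxUnitFun {s : ℝ} (hs : s ≠ 0) : Continuous (approxUnitFun s) := by
  unfold approxUnitFun
  exact Continuous.div (by fun_prop) (by fun_prop) fun t => by positivity

lemma approxUnitFun_eq_mul (s t : ℝ) : approxUnitFun s t = t * (t / (s ^ 2 + t ^ 2)) := by
  rw [approxUnitFun, pow_two, mul_div_assoc]

lemma mul_one_sub_approxUnitFun_sq_le {s : ℝ} (hs : 0 < s) (t : ℝ) :
    t * (1 - approxUnitFun s t) ^ 2 ≤ s / 2 := by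
  have hden : 0 < s ^ 2 + t ^ 2 := by positivity
  have hsub : 1 - approxUnitFun s t = s ^ 2 / (s ^ 2 + t ^ 2) := by
    rw [approxUnitFun]; field_simp; ring
  rw [hsub, div_pow, ← mul_div_assoc, div_le_div_iff₀ (by positivity) two_pos]
  -- `s (s² + t²)² - 2 s⁴ t = s (s (s - t))² + s (s t)² + s (t²)²`
  linarith [mul_nonneg hs.le (sq_nonneg (s * (s - t))), mul_nonneg hs.le (sq_nonneg (s * t)),
    mul_nonneg hs.le (sq_nonneg (t ^ 2))]

lemma TwoSidedIdeal.cfcₙ_approxUnitFun_mem {A : Type*} [NonUnitalCStarAlgebra A]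
    {J : TwoSidedIdeal A} {a : A} (ha : IsSelfAdjoint a) (haJ : a ∈ J) {s : ℝ} (hs : s ≠ 0) :
    cfcₙ (approxUnitFun s) a ∈ J := by
  have hg : Continuous fun t : ℝ => t / (s ^ 2 + t ^ 2) :=
    Continuous.div (by fun_prop) (by fun_prop) fun t => by positivity
  rw [funext (approxUnitFun_eq_mul s),
    cfcₙ_mul _ _ a (by fun_prop) (by simp) hg.continuousOn (by simp), cfcₙ_id' ℝ a]
  exact J.mul_mem_right _ _ haJ

namespace RightCStarModule

variable {A E : Type*} [NonUnitalCStarAlgebra A] [PartialOrder A] [StarOrderedRing A]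
  [NormedAddCommGroup E] [Module ℂ E] [SMul Aᵐᵒᵖ E] [RightCStarModule A E]

lemma norm_sub_op_smul_cfcₙ_approxUnitFun_sq_le {s : ℝ} (hs : 0 < s) (x : E) :
    ‖x - x <• cfcₙ (approxUnitFun s) ⟪x, x⟫_A‖ ^ 2 ≤ s / 2 := by
  rw [norm_sq_eq_norm_inner_self (A := A), inner_sub_op_smul_cfcₙ_self _
    (continuous_approxUnitFun hs.ne') (approxUnitFun_zero_right s)]
  refine norm_cfcₙ_le fun t ht => ?_
  have ht0 : 0 ≤ t := quasispectrum_nonneg_of_nonneg _ inner_self_nonneg t ht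
  rw [Real.norm_of_nonneg (by positivity)]
  exact mul_one_sub_approxUnitFun_sq_le hs t

lemma mem_closure_image_op_smul {J : TwoSidedIdeal A} {x : E} (hx : ⟪x, x⟫_A ∈ J) :
    x ∈ closure ((x <• ·) '' (J : Set A)) := by
  refine Metric.mem_closure_iff.mpr fun ε hε => ⟨_, ⟨_, J.cfcₙ_approxUnitFun_mem
    (isSelfAdjoint_inner_self x) hx (pow_pos hε 2).ne', rfl⟩, ?_⟩
  rw [dist_eq_norm]
  refine lt_of_pow_lt_pow_left₀ 2 hε.le ?_
  calc _ ≤ ε ^ 2 / 2 := norm_sub_op_smul_cfcₙ_approxUnitFun_sq_le (pow_pos hε 2) x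
    _ < ε ^ 2 := half_lt_self (pow_pos hε 2)

end RightCStarModule

lemma LinearMap.map_op_smul_of_map_op_smul_ideal {B Y Z : Type*}
    [NonUnitalCStarAlgebra B] [PartialOrder B] [StarOrderedRing B]
    [NormedAddCommGroup Y] [Module ℂ Y] [SMul Bᵐᵒᵖ Y] [RightCStarModule B Y]
    [NormedAddCommGroup Z] [Module ℂ Z] [SMul Bᵐᵒᵖ Z] [RightCStarModule B Z]
    {J : TwoSidedIdeal B} (hJinner : ∀ y : Y, ⟪y, y⟫_B ∈ J) (u : Y →ₗ[ℂ] Z)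
    (hu : ∃ M : ℝ, ∀ y : Y, ‖u y‖ ≤ M * ‖y‖)
    (huJ : ∀ (y : Y) (j : B), j ∈ J → u (y <• j) = u y <• j)
    (y : Y) (b : B) : u (y <• b) = u y <• b := by
  obtain ⟨M, hM⟩ := hu
  have hcont : Continuous u := AddMonoidHomClass.continuous_of_bound u M hM
  have hclosed : IsClosed {x : Y | u (x <• b) = u x <• b} :=
    isClosed_eq (hcont.comp (RightCStarModule.continuous_op_smul b))
      ((RightCStarModule.continuous_op_smul b).comp hcont)
  have hsub : (y <• ·) '' (J : Set B) ⊆ {x : Y | u (x <• b) = u x <• b} := by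
    rintro _ ⟨j, hj, rfl⟩
    change u ((y <• j) <• b) = u (y <• j) <• b
    rw [RightCStarModule.op_smul_op_smul, huJ y j hj, huJ y (j * b) (J.mul_mem_right _ _ hj),
      RightCStarModule.op_smul_op_smul]
  exact closure_minimal hsub hclosed (RightCStarModule.mem_closure_image_op_smul (hJinner y))

theorem boundedModuleMaps_eq_of_ideal_contains_inner_general
    {B Y Z : Type*}
    [NonUnitalCStarAlgebra B] [PartialOrder B] [StarOrderedRing B]
    [NormedAddCommGroup Y] [NormedSpace ℂ Y] [SMul Bᵐᵒᵖ Y] [RightCStarModule B Y]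
    [NormedAddCommGroup Z] [NormedSpace ℂ Z] [SMul Bᵐᵒᵖ Z] [RightCStarModule B Z]
    (J : TwoSidedIdeal B)
    (hJinner : ∀ y y' : Y, ⟪y, y'⟫_B ∈ J) :
    (∀ u : Y →ₗ[ℂ] Z, (∃ M : ℝ, ∀ y : Y, ‖u y‖ ≤ M * ‖y‖) →
        (∀ (y : Y) (j : B), j ∈ J → u (y <• j) = u y <• j) →
        ∀ (y : Y) (b : B), u (y <• b) = u y <• b) ∧
      {u : Y →ₗ[ℂ] Z | (∃ M : ℝ, ∀ y : Y, ‖u y‖ ≤ M * ‖y‖) ∧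
          ∀ (y : Y) (b : B), u (y <• b) = u y <• b} =
        {u : Y →ₗ[ℂ] Z | (∃ M : ℝ, ∀ y : Y, ‖u y‖ ≤ M * ‖y‖) ∧
          ∀ (y : Y) (j : B), j ∈ J → u (y <• j) = u y <• j} := by
  have key : ∀ u : Y →ₗ[ℂ] Z, _ := fun u =>
    LinearMap.map_op_smul_of_map_op_smul_ideal (fun y => hJinner y y) u
  refine ⟨key, Set.ext fun u => ⟨fun ⟨hbd, h⟩ => ⟨hbd, fun y j _ => h y j⟩,
    fun ⟨hbd, h⟩ => ⟨hbd, key u hbd h⟩⟩⟩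

theorem boundedModuleMaps_eq_of_ideal_contains_inner
    {B Y Z : Type*}
    [NonUnitalCStarAlgebra B] [PartialOrder B] [StarOrderedRing B]
    [NormedAddCommGroup Y] [NormedSpace ℂ Y] [SMul Bᵐᵒᵖ Y] [RightCStarModule B Y]
    [CompleteSpace Y]
    [NormedAddCommGroup Z] [NormedSpace ℂ Z] [SMul Bᵐᵒᵖ Z] [RightCStarModule B Z]
    [CompleteSpace Z]
    (J : TwoSidedIdeal B) (hJclosed : IsClosed (J : Set B))
    (hJinner : ∀ y y' : Y, ⟪y, y'⟫_B ∈ J) :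
    (∀ u : Y →ₗ[ℂ] Z, (∃ M : ℝ, ∀ y : Y, ‖u y‖ ≤ M * ‖y‖) →
        (∀ (y : Y) (j : B), j ∈ J → u (y <• j) = u y <• j) →
        ∀ (y : Y) (b : B), u (y <• b) = u y <• b) ∧
      {u : Y →ₗ[ℂ] Z | (∃ M : ℝ, ∀ y : Y, ‖u y‖ ≤ M * ‖y‖) ∧
          ∀ (y : Y) (b : B), u (y <• b) = u y <• b} =
        {u : Y →ₗ[ℂ] Z | (∃ M : ℝ, ∀ y : Y, ‖u y‖ ≤ M * ‖y‖) ∧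
          ∀ (y : Y) (j : B), j ∈ J → u (y <• j) = u y <• j} :=
  boundedModuleMaps_eq_of_ideal_contains_inner_general J hJinner
end

section
/- Let B be a C*-algebra, let W and Z be Hilbert C*-modules over B, let X ⊆ W and Y ⊆ Z be closed ℂ-linear subspaces such that the closed linear span of {x·b : x ∈ X, b ∈ B} equals W and the closed linear span of {y·b : y ∈ Y, b ∈ B} equals Z, and let T : X → Y, S : Y → X be ℂ-linear maps satisfying ⟨T(x) | y⟩ = ⟨x | S(y)⟩ for all x ∈ X, y ∈ Y. Then there exist bounded B-module maps R : W → Z and R' : Z → W such that R restricted to X equals T, R' restricted to Y equals S, ⟨R(w) | z⟩ = ⟨w | R'(z)⟩ for all w ∈ W and z ∈ Z (so R is adjointable with adjoint R'), and ‖R‖ = ‖T‖ and ‖R'‖ = ‖S‖ (operator norms). -/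
/-!
By the closed graph theorem `T` and `S` are bounded. The extension of `T` sends
`∑ cᵢ xᵢ • bᵢ` to `∑ cᵢ T(xᵢ) • bᵢ`, and everything hinges on the estimate
`‖∑ cᵢ T(xᵢ) • bᵢ‖² ≤ ‖T‖ ‖S‖ ‖∑ cᵢ xᵢ • bᵢ‖²`. Since `P = S T` is symmetric for the
`B`-valued inner product, the vectors `γₘ = ∑ cᵢ Pᵐ(xᵢ) • bᵢ` satisfy `⟪γₘ, γₘ⟫ = ⟪γ₀, γ₂ₘ⟫`,
so `‖γₘ‖² ≤ ‖γ₀‖ ‖γ₂ₘ‖` by Cauchy–Schwarz. Iterating along `m = 2ⁿ` against the crude bound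
`‖γ_{2ⁿ}‖ ≤ C ‖P‖^{2ⁿ}` gives `‖γ₁‖ ≤ ‖P‖ ‖γ₀‖`, and `‖∑ cᵢ T(xᵢ) • bᵢ‖² = ‖⟪γ₀, γ₁⟫‖`.
The resulting extensions satisfy `⟪R w, y⟫ = ⟪w, S y⟫`; as the `B`-orbit of `Y` spans a dense
subspace, this makes `R` a module map extending `T` and adjoint to `R'`. Finally
`‖T‖ ≤ ‖R‖ ≤ √(‖T‖ ‖S‖)` and symmetrically for `S`, which forces `‖T‖ = ‖S‖ = ‖R‖ = ‖R'‖`.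
-/

open scoped InnerProductSpace RightActions

/-- The Hilbert C⋆-module class as it stood in Mathlib (Dec 2024): a right `A`-module
(`SMul Aᵐᵒᵖ E`) with an `A`-valued inner product, right `A`-linear in the second variable.
Mathlib's current `CStarModule` is a left-module notion, so the old one is restated here. -/
class CStarModuleRight (A E : Type*) [NonUnitalSemiring A] [StarRing A]
    [Module ℂ A] [AddCommGroup E] [Module ℂ E] [PartialOrder A] [SMul Aᵐᵒᵖ E] [Norm A] [Norm E]
    extends Inner A E where
  inner_add_right {x} {y} {z} : inner x (y + z) = inner x y + inner x z
  inner_self_nonneg {x} : 0 ≤ inner x x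
  inner_self {x} : inner x x = 0 ↔ x = 0
  inner_op_smul_right {a : A} {x y : E} : inner x (y <• a) = inner x y * a
  inner_smul_right_complex {z : ℂ} {x} {y} : inner x (z • y) = z • inner x y
  star_inner x y : star (inner x y) = inner y x
  norm_eq_sqrt_norm_inner_self x : ‖x‖ = √‖inner x x‖

/-- The operator norm of a map between two spaces with norms: the supremum of the norms of
the images of the points of the closed unit ball. -/
noncomputable def supNormOnBall {E F : Type*} [Norm E] [Norm F] (f : E → F) : ℝ :=
  sSup {r : ℝ | ∃ x : E, ‖x‖ ≤ 1 ∧ r = ‖f x‖}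

lemma pow_two_pow_le_of_sq_le {b : ℕ → ℝ} (hb : ∀ m, 0 ≤ b m)
    (h : ∀ m, b m ^ 2 ≤ b (2 * m)) (n : ℕ) : b 1 ^ 2 ^ n ≤ b (2 ^ n) := by
  induction n with
  | zero => simp
  | succ n ih => calc
      b 1 ^ 2 ^ (n + 1) = (b 1 ^ 2 ^ n) ^ 2 := by rw [pow_succ, pow_mul]
      _ ≤ b (2 ^ n) ^ 2 := by gcongr; exact pow_nonneg (hb 1) _
      _ ≤ b (2 ^ (n + 1)) := by rw [pow_succ' (2 : ℕ) n]; exact h _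

lemma le_of_forall_pow_two_pow_le_mul {x y C : ℝ} (hy : 0 ≤ y)
    (h : ∀ n : ℕ, x ^ 2 ^ n ≤ C * y ^ 2 ^ n) : x ≤ y := by
  by_contra! hyx
  have hx : 0 < x := hy.trans_lt hyx
  have hC : 0 < C := by
    have h₀ := h 0
    simp only [pow_zero, pow_one] at h₀
    by_contra! hC
    nlinarith
  obtain ⟨n, hn⟩ := exists_pow_lt_of_lt_one (inv_pos.2 hC) ((div_lt_one hx).2 hyx)
  have hpow : (y / x) ^ 2 ^ n ≤ (y / x) ^ n :=
    pow_le_pow_of_le_one (by positivity) ((div_le_one hx).2 hyx.le) Nat.lt_two_pow_self.le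
  refine lt_irrefl (1 : ℝ) (calc
    1 ≤ C * (y / x) ^ 2 ^ n := by
      rw [div_pow, mul_div_assoc', le_div_iff₀ (by positivity), one_mul]
      exact h n
    _ ≤ C * (y / x) ^ n := by gcongr
    _ < C * C⁻¹ := by gcongr
    _ = 1 := mul_inv_cancel₀ hC.ne')

lemma le_mul_of_sq_le_mul_two_mul {a : ℕ → ℝ} {c C K : ℝ} (ha : ∀ m, 0 ≤ a m) (hc : 0 ≤ c)
    (hK : 0 ≤ K) (hsq : ∀ m, a m ^ 2 ≤ c * a (2 * m))
    (hgrowth : ∀ n : ℕ, a (2 ^ n) ≤ C * K ^ 2 ^ n) : a 1 ≤ c * K := by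
  rcases hc.eq_or_lt with rfl | hc
  · nlinarith [hsq 1, ha 1]
  -- normalise to `c = 1`
  have hb := pow_two_pow_le_of_sq_le (b := fun m => a m / c)
    (fun m => div_nonneg (ha m) hc.le) fun m => by
      rw [div_pow, div_le_div_iff₀ (by positivity) hc]
      nlinarith [mul_le_mul_of_nonneg_right (hsq m) hc.le]
  rw [← div_le_iff₀' hc]
  refine le_of_forall_pow_two_pow_le_mul hK (C := C / c) fun n => (hb n).trans ?_
  rw [div_mul_eq_mul_div]
  exact div_le_div_of_nonneg_right (hgrowth n) hc.le

lemma eq_of_le_of_le_sqrt_mul {t s r r' : ℝ} (ht : 0 ≤ t) (hs : 0 ≤ s) (htr : t ≤ r)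
    (hr : r ≤ √(t * s)) (hsr' : s ≤ r') (hr' : r' ≤ √(s * t)) : r = t ∧ r' = s := by
  obtain rfl : t = s := by
    have h₁ := (Real.le_sqrt ht (by positivity)).1 (htr.trans hr)
    have h₂ := (Real.le_sqrt hs (by positivity)).1 (hsr'.trans hr')
    nlinarith
  rw [Real.sqrt_mul_self ht] at hr hr'
  exact ⟨le_antisymm hr htr, le_antisymm hr' hsr'⟩

lemma supNormOnBall_eq_opNorm {𝕜 E F : Type*} [DenselyNormedField 𝕜]
    [NormedAddCommGroup E] [NormedSpace 𝕜 E] [NormedAddCommGroup F] [NormedSpace 𝕜 F]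
    (f : E →L[𝕜] F) : supNormOnBall f = ‖f‖ := by
  rw [← f.sSup_unitClosedBall_eq_norm, supNormOnBall]
  congr 1
  ext r
  simp [eq_comm]

lemma ContinuousLinearMap.opNorm_le_of_forall_apply_coe_eq {𝕜 E F : Type*}
    [NontriviallyNormedField 𝕜] [NormedAddCommGroup E] [NormedSpace 𝕜 E]
    [NormedAddCommGroup F] [NormedSpace 𝕜 F] {X : Submodule 𝕜 E} {Y : Submodule 𝕜 F}
    (R : E →L[𝕜] F) (T : X →L[𝕜] Y) (h : ∀ x : X, R x = T x) : ‖T‖ ≤ ‖R‖ :=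
  T.opNorm_le_bound (norm_nonneg R) fun x => by
    simpa only [h, Submodule.coe_norm] using R.le_opNorm x

namespace CStarModuleRight

section Algebraic

variable {A E : Type*} [NonUnitalRing A] [StarRing A] [AddCommGroup E] [Module ℂ A]
  [Module ℂ E] [PartialOrder A] [SMul Aᵐᵒᵖ E] [Norm A] [Norm E] [CStarModuleRight A E]

lemma inner_add_left {x y z : E} : ⟪x + y, z⟫_A = ⟪x, z⟫_A + ⟪y, z⟫_A := by
  rw [← star_inner z (x + y), inner_add_right, star_add, star_inner, star_inner]

lemma inner_op_smul_left {a : A} {x y : E} : ⟪x <• a, y⟫_A = star a * ⟪x, y⟫_A := by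
  rw [← star_inner y (x <• a), inner_op_smul_right, star_mul, star_inner]

lemma inner_smul_right_real {r : ℝ} {x y : E} : ⟪x, r • y⟫_A = r • ⟪x, y⟫_A := by
  rw [RCLike.real_smul_eq_coe_smul (K := ℂ) r y, inner_smul_right_complex]
  simp

variable [StarModule ℂ A]

lemma inner_smul_left_complex {z : ℂ} {x y : E} : ⟪z • x, y⟫_A = star z • ⟪x, y⟫_A := by
  rw [← star_inner y (z • x), inner_smul_right_complex, star_smul, star_inner]

lemma inner_smul_left_real {r : ℝ} {x y : E} : ⟪r • x, y⟫_A = r • ⟪x, y⟫_A := by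
  rw [RCLike.real_smul_eq_coe_smul (K := ℂ) r x, inner_smul_left_complex]
  simp

variable (A) in
def innerₛₗ : E →ₗ⋆[ℂ] E →ₗ[ℂ] A where
  toFun x :=
    { toFun y := ⟪x, y⟫_A
      map_add' _ _ := inner_add_right
      map_smul' _ _ := inner_smul_right_complex }
  map_add' _ _ := by ext; simp [inner_add_left]
  map_smul' _ _ := by ext; simp [inner_smul_left_complex]

lemma innerₛₗ_apply {x y : E} : innerₛₗ A x y = ⟪x, y⟫_A := rfl

lemma inner_zero_right {x : E} : ⟪x, 0⟫_A = 0 := map_zero (innerₛₗ A x)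

lemma inner_zero_left {x : E} : ⟪0, x⟫_A = 0 := map_zero ((innerₛₗ A).flip x)

lemma inner_sub_right {x y z : E} : ⟪x, y - z⟫_A = ⟪x, y⟫_A - ⟪x, z⟫_A :=
  map_sub (innerₛₗ A x) y z

lemma inner_sub_left {x y z : E} : ⟪x - y, z⟫_A = ⟪x, z⟫_A - ⟪y, z⟫_A :=
  map_sub ((innerₛₗ A).flip z) x y

lemma inner_sum_right {ι : Type*} {s : Finset ι} {x : E} {y : ι → E} :
    ⟪x, ∑ i ∈ s, y i⟫_A = ∑ i ∈ s, ⟪x, y i⟫_A :=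
  map_sum (innerₛₗ A x) ..

lemma inner_sum_left {ι : Type*} {s : Finset ι} {x : ι → E} {y : E} :
    ⟪∑ i ∈ s, x i, y⟫_A = ∑ i ∈ s, ⟪x i, y⟫_A :=
  map_sum ((innerₛₗ A).flip y) ..

variable (A) in
noncomputable def linearCombinationOpSMul {ι : Type*} (v : ι → E) : (ι × A →₀ ℂ) →ₗ[ℂ] E :=
  Finsupp.linearCombination ℂ fun p => v p.1 <• p.2

variable {F ι : Type*} [AddCommGroup F] [Module ℂ F] [SMul Aᵐᵒᵖ F] [Norm F] [CStarModuleRight A F]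

lemma inner_linearCombinationOpSMul_left_congr {u : ι → E} {u' : ι → F} {z : E} {z' : F}
    (h : ∀ i, ⟪u i, z⟫_A = ⟪u' i, z'⟫_A) (f : ι × A →₀ ℂ) :
    ⟪linearCombinationOpSMul A u f, z⟫_A = ⟪linearCombinationOpSMul A u' f, z'⟫_A := by
  simp only [linearCombinationOpSMul, Finsupp.linearCombination_apply, Finsupp.sum,
    inner_sum_left, inner_smul_left_complex, inner_op_smul_left, h]

lemma inner_linearCombinationOpSMul_congr {u v : ι → E} {u' v' : ι → F}
    (h : ∀ i j, ⟪u i, v j⟫_A = ⟪u' i, v' j⟫_A) (f g : ι × A →₀ ℂ) :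
    ⟪linearCombinationOpSMul A u f, linearCombinationOpSMul A v g⟫_A
      = ⟪linearCombinationOpSMul A u' f, linearCombinationOpSMul A v' g⟫_A := by
  simp only [linearCombinationOpSMul, Finsupp.linearCombination_apply, Finsupp.sum,
    inner_sum_left, inner_sum_right, inner_smul_left_complex, inner_smul_right_complex,
    inner_op_smul_left, inner_op_smul_right, h]

end Algebraic

section Generating

variable {A E : Type*} [AddCommGroup E] [Module ℂ E] [SMul Aᵐᵒᵖ E] [TopologicalSpace E]

variable (A) in
def IsGenerating (X : Submodule ℂ E) : Prop :=
  Dense (Submodule.span ℂ {w : E | ∃ x ∈ X, ∃ a : A, w = x <• a} : Set E)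

variable {X : Submodule ℂ E}

lemma IsGenerating.continuousLinearMap_ext {F : Type*} [AddCommGroup F] [Module ℂ F]
    [TopologicalSpace F] [T2Space F] (hX : IsGenerating A X) {f g : E →L[ℂ] F}
    (h : ∀ x ∈ X, ∀ a : A, f (x <• a) = g (x <• a)) : f = g :=
  ContinuousLinearMap.ext_on hX (by rintro _ ⟨x, hx, a, rfl⟩; exact h x hx a)

lemma IsGenerating.denseRange_linearCombinationOpSMul (hX : IsGenerating A X) :
    DenseRange (linearCombinationOpSMul A ((↑) : X → E)) := by
  have hrange : Set.range (fun p : X × A => (p.1 : E) <• p.2)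
      = {w : E | ∃ x ∈ X, ∃ a : A, w = x <• a} := by
    ext w
    constructor
    · rintro ⟨⟨x, a⟩, rfl⟩
      exact ⟨x, x.2, a, rfl⟩
    · rintro ⟨x, hx, a, rfl⟩
      exact ⟨(⟨x, hx⟩, a), rfl⟩
  rw [DenseRange, ← LinearMap.coe_range, linearCombinationOpSMul,
    Finsupp.range_linearCombination, hrange]
  exact hX

end Generating

section Norm

variable {A E : Type*} [NonUnitalCStarAlgebra A] [PartialOrder A]
  [NormedAddCommGroup E] [NormedSpace ℂ E] [SMul Aᵐᵒᵖ E] [CStarModuleRight A E]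

lemma norm_sq_eq (x : E) : ‖x‖ ^ 2 = ‖⟪x, x⟫_A‖ := by
  rw [norm_eq_sqrt_norm_inner_self (A := A) x, Real.sq_sqrt (norm_nonneg _)]

variable [StarOrderedRing A]

lemma inner_mul_inner_swap_le {x y : E} : ⟪y, x⟫_A * ⟪x, y⟫_A ≤ ‖x‖ ^ 2 • ⟪y, y⟫_A := by
  rcases eq_or_ne x 0 with rfl | hx
  · simp [inner_zero_left, inner_zero_right]
  -- expand `0 ≤ ⟪x • a* - ‖x‖² y, x • a* - ‖x‖² y⟫` at `a = ⟪y, x⟫`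
  have key : ∀ a : A, (0 : A) ≤ ‖x‖ ^ 2 • (a * star a) - ‖x‖ ^ 2 • (a * ⟪x, y⟫_A)
      - ‖x‖ ^ 2 • (⟪y, x⟫_A * star a) + ‖x‖ ^ 2 • (‖x‖ ^ 2 • ⟪y, y⟫_A) := fun a => calc
    (0 : A) ≤ ⟪x <• star a - ‖x‖ ^ 2 • y, x <• star a - ‖x‖ ^ 2 • y⟫_A := inner_self_nonneg
    _ = a * ⟪x, x⟫_A * star a - ‖x‖ ^ 2 • (a * ⟪x, y⟫_A)
          - ‖x‖ ^ 2 • (⟪y, x⟫_A * star a) + ‖x‖ ^ 2 • (‖x‖ ^ 2 • ⟪y, y⟫_A) := by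
      simp only [inner_sub_right, inner_op_smul_right, inner_sub_left, inner_op_smul_left,
        star_star, inner_smul_left_real, smul_mul_assoc,
        inner_smul_right_real, smul_sub, sub_mul, mul_assoc]
      abel
    _ ≤ _ := by
      gcongr
      calc _ ≤ ‖⟪x, x⟫_A‖ • (a * star a) :=
            CStarAlgebra.star_right_conjugate_le_norm_smul (star_inner x x)
        _ = ‖x‖ ^ 2 • (a * star a) := by rw [norm_sq_eq (A := A)]
  specialize key ⟪y, x⟫_A
  simp only [star_inner, sub_self, zero_sub, le_neg_add_iff_add_le, add_zero] at key
  rwa [smul_le_smul_iff_of_pos_left (pow_pos (norm_pos_iff.mpr hx) _)] at key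

variable (E) in
lemma norm_inner_le {x y : E} : ‖⟪x, y⟫_A‖ ≤ ‖x‖ * ‖y‖ := by
  have := calc ‖⟪x, y⟫_A‖ ^ 2 = ‖⟪y, x⟫_A * ⟪x, y⟫_A‖ := by
                rw [← star_inner x y, CStarRing.norm_star_mul_self, pow_two]
    _ ≤ ‖‖x‖ ^ 2 • ⟪y, y⟫_A‖ := by
                refine CStarAlgebra.norm_le_norm_of_nonneg_of_le ?_ inner_mul_inner_swap_le
                rw [← star_inner x y]
                exact star_mul_self_nonneg ⟪x, y⟫_A
    _ = (‖x‖ * ‖y‖) ^ 2 := by simp [norm_smul, ← norm_sq_eq (A := A) y, mul_pow]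
  exact (pow_le_pow_iff_left₀ (norm_nonneg _) (by positivity) two_ne_zero).mp this

variable (A) in
noncomputable def innerSL : E →L⋆[ℂ] E →L[ℂ] A :=
  LinearMap.mkContinuous₂ (innerₛₗ A) 1 fun x y => by
    simp [innerₛₗ_apply, norm_inner_le E]

lemma innerSL_apply {x y : E} : innerSL A x y = ⟪x, y⟫_A := rfl

lemma continuous_inner_left (y : E) : Continuous fun x : E => ⟪x, y⟫_A := by
  simp_rw [← innerSL_apply]
  fun_prop

lemma norm_op_smul_le (x : E) (a : A) : ‖x <• a‖ ≤ ‖x‖ * ‖a‖ := by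
  have h : ‖x <• a‖ * ‖x <• a‖ ≤ ‖x <• a‖ * (‖x‖ * ‖a‖) := calc
    ‖x <• a‖ * ‖x <• a‖ = ‖⟪x <• a, x⟫_A * a‖ := by
      rw [← sq, norm_sq_eq (A := A), inner_op_smul_right]
    _ ≤ ‖⟪x <• a, x⟫_A‖ * ‖a‖ := norm_mul_le _ _
    _ ≤ ‖x <• a‖ * ‖x‖ * ‖a‖ := by gcongr; exact norm_inner_le E
    _ = _ := mul_assoc ..
  rcases (norm_nonneg (x <• a)).eq_or_lt with h0 | h0
  · rw [← h0]; positivity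
  · exact le_of_mul_le_mul_left h h0

variable {ι : Type*} in
lemma norm_linearCombinationOpSMul_le (v : ι → E) (f : ι × A →₀ ℂ) :
    ‖linearCombinationOpSMul A v f‖ ≤ ∑ p ∈ f.support, ‖f p‖ * (‖v p.1‖ * ‖p.2‖) := by
  rw [linearCombinationOpSMul, Finsupp.linearCombination_apply, Finsupp.sum]
  refine (norm_sum_le _ _).trans (Finset.sum_le_sum fun p _ => ?_)
  rw [norm_smul]
  gcongr
  exact norm_op_smul_le _ _

lemma IsGenerating.ext_inner_right {X : Submodule ℂ E} (hX : IsGenerating A X) {z₁ z₂ : E}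
    (h : ∀ x ∈ X, ⟪z₁, x⟫_A = ⟪z₂, x⟫_A) : z₁ = z₂ := by
  have hSL : innerSL A z₁ = innerSL A z₂ := hX.continuousLinearMap_ext fun x hx a => by
    simp only [innerSL_apply, inner_op_smul_right, h x hx]
  rw [← sub_eq_zero, ← inner_self (A := A), inner_sub_left, sub_eq_zero]
  exact congr($hSL (z₁ - z₂))

end Norm

section SymmetricOperator

variable {B W : Type*} [NonUnitalCStarAlgebra B] [PartialOrder B]
  [NormedAddCommGroup W] [NormedSpace ℂ W] [SMul Bᵐᵒᵖ W] [CStarModuleRight B W]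
  {X : Submodule ℂ W} {P : X →L[ℂ] X}

lemma inner_pow_apply_left (hP : ∀ x x' : X, ⟪(P x : W), x'⟫_B = ⟪(x : W), P x'⟫_B)
    (m : ℕ) (x x' : X) : ⟪((P ^ m) x : W), x'⟫_B = ⟪(x : W), (P ^ m) x'⟫_B := by
  induction m generalizing x x' with
  | zero => rfl
  | succ m ih =>
    rw [pow_succ, mul_apply_eq_comp, ih, hP, pow_mul_comm', mul_apply_eq_comp]

variable [StarOrderedRing B] in
lemma norm_linearCombinationOpSMul_apply_le
    (hP : ∀ x x' : X, ⟪(P x : W), x'⟫_B = ⟪(x : W), P x'⟫_B) (f : X × B →₀ ℂ) :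
    ‖linearCombinationOpSMul B (fun x : X => (P x : W)) f‖
      ≤ ‖P‖ * ‖linearCombinationOpSMul B ((↑) : X → W) f‖ := by
  let γ : ℕ → W := fun m => linearCombinationOpSMul B (fun x : X => ((P ^ m) x : W)) f
  have hsq : ∀ m, ‖γ m‖ ^ 2 ≤ ‖γ 0‖ * ‖γ (2 * m)‖ := fun m => by
    rw [norm_sq_eq (A := B), inner_linearCombinationOpSMul_congr (u' := fun x => ((P ^ 0) x : W))
      (v' := fun x => ((P ^ (2 * m)) x : W)) (fun x x' => by
        rw [inner_pow_apply_left hP, pow_zero, one_apply_eq_self,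
          ← mul_apply_eq_comp, ← pow_add, ← two_mul])]
    exact norm_inner_le W
  have hgrowth : ∀ n : ℕ, ‖γ (2 ^ n)‖
      ≤ (∑ p ∈ f.support, ‖f p‖ * (‖p.1‖ * ‖p.2‖)) * ‖P‖ ^ 2 ^ n := fun n => by
    refine (norm_linearCombinationOpSMul_le _ f).trans ?_
    rw [Finset.sum_mul]
    refine Finset.sum_le_sum fun p _ => ?_
    have hPp : ‖(P ^ 2 ^ n) p.1‖ ≤ ‖P‖ ^ 2 ^ n * ‖p.1‖ :=
      ((P ^ 2 ^ n).le_opNorm p.1).trans (by gcongr; exact norm_pow_le' P (by positivity))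
    calc ‖f p‖ * (‖((P ^ 2 ^ n) p.1 : W)‖ * ‖p.2‖)
        ≤ ‖f p‖ * ((‖P‖ ^ 2 ^ n * ‖p.1‖) * ‖p.2‖) := by gcongr; exact hPp
      _ = ‖f p‖ * (‖p.1‖ * ‖p.2‖) * ‖P‖ ^ 2 ^ n := by ring
  have key := le_mul_of_sq_le_mul_two_mul (fun m => norm_nonneg (γ m)) (norm_nonneg _)
    (norm_nonneg P) hsq hgrowth
  simpa [γ, mul_comm] using key

end SymmetricOperator

section AdjointPair

variable {B W Z : Type*} [NonUnitalCStarAlgebra B] [PartialOrder B]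
  [NormedAddCommGroup W] [NormedSpace ℂ W] [SMul Bᵐᵒᵖ W] [CStarModuleRight B W]
  [NormedAddCommGroup Z] [NormedSpace ℂ Z] [SMul Bᵐᵒᵖ Z] [CStarModuleRight B Z]
  {X : Submodule ℂ W} {Y : Submodule ℂ Z}

variable (B) in
def IsAdjointPair (T : X → Y) (S : Y → X) : Prop :=
  ∀ (x : X) (y : Y), ⟪(T x : Z), (y : Z)⟫_B = ⟪(x : W), (S y : W)⟫_B

lemma IsAdjointPair.symm {T : X → Y} {S : Y → X} (h : IsAdjointPair B T S) :
    IsAdjointPair B S T := fun y x => by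
  rw [← star_inner, ← h, star_inner]

variable [StarOrderedRing B]

lemma IsAdjointPair.continuous [CompleteSpace W] [CompleteSpace Z] {T : X →ₗ[ℂ] Y}
    {S : Y → X} (h : IsAdjointPair B T S) (hX : IsClosed (X : Set W))
    (hY : IsClosed (Y : Set Z)) (hYgen : IsGenerating B Y) : Continuous T := by
  have := hX.completeSpace_coe
  have := hY.completeSpace_coe
  refine T.continuous_of_seq_closed_graph fun u x y hu hTu =>
    Subtype.ext <| hYgen.ext_inner_right fun y' hy' => ?_
  have h₁ := (((continuous_inner_left (A := B) y').comp continuous_subtype_val).tendsto y).comp hTu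
  have h₂ := (((continuous_inner_left (A := B) (S ⟨y', hy'⟩ : W)).comp
    continuous_subtype_val).tendsto x).comp hu
  exact (tendsto_nhds_unique h₁ (h₂.congr fun n => (h (u n) ⟨y', hy'⟩).symm)).trans
    (h x ⟨y', hy'⟩).symm

lemma IsAdjointPair.norm_linearCombinationOpSMul_le {T : X →L[ℂ] Y} {S : Y →L[ℂ] X}
    (h : IsAdjointPair B T S) (f : X × B →₀ ℂ) :
    ‖linearCombinationOpSMul B (fun x : X => (T x : Z)) f‖
      ≤ √(‖T‖ * ‖S‖) * ‖linearCombinationOpSMul B ((↑) : X → W) f‖ := by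
  set α := linearCombinationOpSMul B ((↑) : X → W) f
  have hST : ∀ x x' : X, ⟪((S ∘L T) x : W), x'⟫_B = ⟪(x : W), (S ∘L T) x'⟫_B :=
    fun x x' => (h.symm (T x) x').trans (h x (T x'))
  have hsq : ‖linearCombinationOpSMul B (fun x : X => (T x : Z)) f‖ ^ 2
      ≤ ‖α‖ * ‖linearCombinationOpSMul B (fun x : X => ((S ∘L T) x : W)) f‖ := by
    rw [norm_sq_eq (A := B), inner_linearCombinationOpSMul_congr (u' := ((↑) : X → W))
      (v' := fun x => ((S ∘L T) x : W)) (fun x x' => h x (T x'))]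
    exact norm_inner_le W
  rw [← Real.sqrt_sq (norm_nonneg α), ← Real.sqrt_mul (by positivity)]
  refine (Real.le_sqrt (norm_nonneg _) (by positivity)).2 (hsq.trans ?_)
  calc ‖α‖ * ‖linearCombinationOpSMul B (fun x : X => ((S ∘L T) x : W)) f‖
      ≤ ‖α‖ * (‖S ∘L T‖ * ‖α‖) := by gcongr; exact norm_linearCombinationOpSMul_apply_le hST f
    _ ≤ ‖α‖ * (‖S‖ * ‖T‖ * ‖α‖) := by gcongr; exact S.opNorm_comp_le T
    _ = ‖T‖ * ‖S‖ * ‖α‖ ^ 2 := by ring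

lemma IsAdjointPair.exists_extension [CompleteSpace Z] {T : X →L[ℂ] Y} {S : Y →L[ℂ] X}
    (h : IsAdjointPair B T S) (hX : IsGenerating B X) :
    ∃ R : W →L[ℂ] Z, (∀ (w : W) (y : Y), ⟪R w, (y : Z)⟫_B = ⟪w, (S y : W)⟫_B) ∧
      ‖R‖ ≤ √(‖T‖ * ‖S‖) := by
  have hdense := hX.denseRange_linearCombinationOpSMul
  have hbound := h.norm_linearCombinationOpSMul_le
  refine ⟨(linearCombinationOpSMul B fun x : X => (T x : Z)).extendOfNorm
    (linearCombinationOpSMul B ((↑) : X → W)), fun w y => ?_,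
    LinearMap.opNorm_extendOfNorm_le hdense (by positivity) hbound⟩
  refine hdense.induction_on w
    (isClosed_eq ((continuous_inner_left _).comp (ContinuousLinearMap.continuous _))
      (continuous_inner_left _)) fun f => ?_
  rw [LinearMap.extendOfNorm_eq hdense ⟨_, hbound⟩]
  exact inner_linearCombinationOpSMul_left_congr (fun x => h x y) f

lemma map_op_smul_of_forall_inner_eq (hY : IsGenerating B Y) {R : W → Z} {S : Y → W}
    (hR : ∀ (w : W) (y : Y), ⟪R w, (y : Z)⟫_B = ⟪w, S y⟫_B) (w : W) (b : B) :
    R (w <• b) = R w <• b :=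
  hY.ext_inner_right fun y hy => by
    rw [hR _ ⟨y, hy⟩, inner_op_smul_left, inner_op_smul_left, hR _ ⟨y, hy⟩]

lemma IsAdjointPair.apply_eq_of_forall_inner_eq {T : X → Y} {S : Y → X}
    (h : IsAdjointPair B T S) (hY : IsGenerating B Y) {R : W → Z}
    (hR : ∀ (w : W) (y : Y), ⟪R w, (y : Z)⟫_B = ⟪w, (S y : W)⟫_B) (x : X) : R x = T x :=
  hY.ext_inner_right fun y hy => by rw [hR _ ⟨y, hy⟩, ← h x ⟨y, hy⟩]

lemma inner_apply_eq_inner_apply_of_forall_inner_eq (hY : IsGenerating B Y) {R : W →L[ℂ] Z}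
    {R' : Z →L[ℂ] W} (hR' : ∀ (z : Z) (b : B), R' (z <• b) = R' z <• b)
    (hR : ∀ (w : W) (y : Y), ⟪R w, (y : Z)⟫_B = ⟪w, R' y⟫_B) (w : W) (z : Z) :
    ⟪R w, z⟫_B = ⟪w, R' z⟫_B := by
  have hSL : innerSL B (R w) = (innerSL B w).comp R' := hY.continuousLinearMap_ext fun y hy b => by
    simp only [innerSL_apply, ContinuousLinearMap.comp_apply, hR', inner_op_smul_right,
      hR w ⟨y, hy⟩]
  exact congr($hSL z)

end AdjointPair

end CStarModuleRight

open CStarModuleRight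

theorem adjointable_extends_to_adjointable_module_map
    {B W Z : Type*}
    [NonUnitalCStarAlgebra B] [PartialOrder B] [StarOrderedRing B]
    [NormedAddCommGroup W] [NormedSpace ℂ W] [SMul Bᵐᵒᵖ W] [CStarModuleRight B W]
    [CompleteSpace W]
    [NormedAddCommGroup Z] [NormedSpace ℂ Z] [SMul Bᵐᵒᵖ Z] [CStarModuleRight B Z]
    [CompleteSpace Z]
    (X : Submodule ℂ W) (hX : IsClosed (X : Set W))
    (Y : Submodule ℂ Z) (hY : IsClosed (Y : Set Z))
    (hXgen : closure (Submodule.span ℂ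
      {w : W | ∃ x ∈ X, ∃ b : B, w = x <• b} : Set W) = Set.univ)
    (hYgen : closure (Submodule.span ℂ
      {z : Z | ∃ y ∈ Y, ∃ b : B, z = y <• b} : Set Z) = Set.univ)
    (T : X →ₗ[ℂ] Y) (S : Y →ₗ[ℂ] X)
    (h : ∀ (x : X) (y : Y), ⟪(T x : Z), (y : Z)⟫_B = ⟪(x : W), (S y : W)⟫_B) :
    ∃ (R : W →ₗ[ℂ] Z) (R' : Z →ₗ[ℂ] W),
      (∀ (w : W) (b : B), R (w <• b) = R w <• b) ∧
      (∀ (z : Z) (b : B), R' (z <• b) = R' z <• b) ∧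
      (∃ M : ℝ, ∀ w : W, ‖R w‖ ≤ M * ‖w‖) ∧
      (∃ M : ℝ, ∀ z : Z, ‖R' z‖ ≤ M * ‖z‖) ∧
      (∀ x : X, R x = T x) ∧
      (∀ y : Y, R' y = S y) ∧
      (∀ (w : W) (z : Z), ⟪R w, z⟫_B = ⟪w, R' z⟫_B) ∧
      supNormOnBall (⇑R) = supNormOnBall (fun x : X => (T x : Z)) ∧
      supNormOnBall (⇑R') = supNormOnBall (fun y : Y => (S y : W)) := by
  have hXgen' : IsGenerating B X := dense_iff_closure_eq.mpr hXgen
  have hYgen' : IsGenerating B Y := dense_iff_closure_eq.mpr hYgen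
  have hTS : IsAdjointPair B T S := h
  let Tc : X →L[ℂ] Y := ⟨T, hTS.continuous hX hY hYgen'⟩
  let Sc : Y →L[ℂ] X := ⟨S, hTS.symm.continuous hY hX hXgen'⟩
  replace hTS : IsAdjointPair B Tc Sc := h
  obtain ⟨R, hR, hRnorm⟩ := hTS.exists_extension hXgen'
  obtain ⟨R', hR', hR'norm⟩ := hTS.symm.exists_extension hYgen'
  have hRT : ∀ x : X, R x = T x := hTS.apply_eq_of_forall_inner_eq hYgen' hR
  have hR'S : ∀ y : Y, R' y = S y := hTS.symm.apply_eq_of_forall_inner_eq hXgen' hR'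
  have hR'mod := map_op_smul_of_forall_inner_eq hXgen' hR'
  obtain ⟨hRTnorm, hR'Snorm⟩ := eq_of_le_of_le_sqrt_mul (norm_nonneg Tc) (norm_nonneg Sc)
    (R.opNorm_le_of_forall_apply_coe_eq Tc hRT) hRnorm
    (R'.opNorm_le_of_forall_apply_coe_eq Sc hR'S) hR'norm
  refine ⟨R, R', map_op_smul_of_forall_inner_eq hYgen' hR, hR'mod,
    ⟨‖R‖, R.le_opNorm⟩, ⟨‖R'‖, R'.le_opNorm⟩, hRT, hR'S,
    inner_apply_eq_inner_apply_of_forall_inner_eq hYgen' hR'mod fun w y => by rw [hR, hR'S]; rfl,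
    ?_, ?_⟩
  · exact (supNormOnBall_eq_opNorm R).trans (hRTnorm.trans (supNormOnBall_eq_opNorm Tc).symm)
  · exact (supNormOnBall_eq_opNorm R').trans (hR'Snorm.trans (supNormOnBall_eq_opNorm Sc).symm)
end

section
/- Let B be a C*-algebra, let W and Z be Hilbert C*-modules over B, let X ⊆ W and Y ⊆ Z be closed ℂ-linear subspaces such that the closed linear span of {x·b : x ∈ X, b ∈ B} equals W and the closed linear span of {y·b : y ∈ Y, b ∈ B} equals Z, and let T : X → Y, S : Y → X be bounded ℂ-linear maps satisfying ⟨T(x) | y⟩ = ⟨x | S(y)⟩ for all x ∈ X, y ∈ Y. Then ‖S ∘ T‖ = ‖T‖² and ‖S‖ = ‖T‖, where all norms are operator norms of bounded linear maps between the normed spaces X and Y. -/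
/-! Cauchy–Schwarz for the `B`-valued inner product gives
`‖T x‖² = ‖⟪x, S (T x)⟫‖ ≤ ‖x‖ ‖S (T x)‖ ≤ ‖S T‖ ‖x‖²`, so `‖T‖² ≤ ‖S T‖ ≤ ‖S‖ ‖T‖` and hence
`‖T‖ ≤ ‖S‖`. The hypothesis is symmetric in `T` and `S`, so also `‖S‖ ≤ ‖T‖`, and then
`‖S T‖ ≤ ‖S‖ ‖T‖ = ‖T‖²`. -/

open scoped InnerProductSpace RightActions

namespace RightCStarModule

-- Since `y <• a = op a • y` and `op (⟪x, y⟫ * a) = op a * op ⟪x, y⟫`, a right Hilbert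
-- `A`-module is a Hilbert `Aᵐᵒᵖ`-module in Mathlib's (left) sense.
abbrev toCStarModuleMulOpposite {A E : Type*} [NonUnitalCStarAlgebra A] [PartialOrder A]
    [AddCommGroup E] [Module ℂ E] [SMul Aᵐᵒᵖ E] [Norm E] [RightCStarModule A E] :
    CStarModule Aᵐᵒᵖ E where
  inner x y := MulOpposite.op ⟪x, y⟫_A
  inner_add_right := by simp [inner_add_right]
  inner_self_nonneg := MulOpposite.unop_le_unop.mp inner_self_nonneg
  inner_self := by simp [inner_self]
  inner_op_smul_right {a x y} := by
    simpa using congrArg MulOpposite.op (inner_op_smul_right (a := a.unop) (x := x) (y := y))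
  inner_smul_right_complex := by simp [inner_smul_right_complex]
  star_inner x y := by rw [← MulOpposite.op_star, star_inner]
  norm_eq_sqrt_norm_inner_self := norm_eq_sqrt_norm_inner_self (A := A)

variable {A E F : Type*} [NonUnitalCStarAlgebra A] [PartialOrder A] [StarOrderedRing A]
  [AddCommGroup E] [Module ℂ E] [SMul Aᵐᵒᵖ E] [Norm E] [RightCStarModule A E]
  [AddCommGroup F] [Module ℂ F] [SMul Aᵐᵒᵖ F] [Norm F] [RightCStarModule A F]

theorem norm_inner_le (x y : E) : ‖⟪x, y⟫_A‖ ≤ ‖x‖ * ‖y‖ :=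
  let := toCStarModuleMulOpposite (A := A) (E := E)
  CStarModule.norm_inner_le (A := Aᵐᵒᵖ) E

theorem sq_norm_le_of_inner_self_eq_inner {v : F} {x y : E} (h : ⟪v, v⟫_A = ⟪x, y⟫_A) :
    ‖v‖ ^ 2 ≤ ‖x‖ * ‖y‖ := by
  rw [norm_eq_sqrt_norm_inner_self (A := A) v, Real.sq_sqrt (norm_nonneg _), h]
  exact norm_inner_le x y

end RightCStarModule

namespace ContinuousLinearMap

variable {𝕜 E F : Type*} [NontriviallyNormedField 𝕜] [SeminormedAddCommGroup E]
  [SeminormedAddCommGroup F] [NormedSpace 𝕜 E] [NormedSpace 𝕜 F] {T : E →L[𝕜] F} {S : F →L[𝕜] E}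

theorem sq_opNorm_le_opNorm_comp_of_sq_norm_apply_le (h : ∀ x, ‖T x‖ ^ 2 ≤ ‖x‖ * ‖S (T x)‖) :
    ‖T‖ ^ 2 ≤ ‖S ∘L T‖ := by
  have hbound : ∀ x, ‖T x‖ ≤ √‖S ∘L T‖ * ‖x‖ := fun x => by
    rw [← Real.sqrt_sq (norm_nonneg x), ← Real.sqrt_mul (norm_nonneg _)]
    refine Real.le_sqrt_of_sq_le ?_
    calc ‖T x‖ ^ 2 ≤ ‖x‖ * ‖S (T x)‖ := h x
      _ ≤ ‖x‖ * (‖S ∘L T‖ * ‖x‖) := by gcongr; exact (S ∘L T).le_opNorm x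
      _ = ‖S ∘L T‖ * ‖x‖ ^ 2 := by ring
  calc ‖T‖ ^ 2 ≤ √‖S ∘L T‖ ^ 2 := by gcongr; exact T.opNorm_le_bound (Real.sqrt_nonneg _) hbound
    _ = ‖S ∘L T‖ := Real.sq_sqrt (norm_nonneg _)

theorem opNorm_le_opNorm_of_sq_norm_apply_le (h : ∀ x, ‖T x‖ ^ 2 ≤ ‖x‖ * ‖S (T x)‖) :
    ‖T‖ ≤ ‖S‖ := by
  rcases (norm_nonneg T).eq_or_lt with hT | hT
  · exact hT ▸ norm_nonneg S
  refine le_of_mul_le_mul_right ?_ hT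
  calc ‖T‖ * ‖T‖ = ‖T‖ ^ 2 := (sq _).symm
    _ ≤ ‖S ∘L T‖ := sq_opNorm_le_opNorm_comp_of_sq_norm_apply_le h
    _ ≤ ‖S‖ * ‖T‖ := opNorm_comp_le S T

end ContinuousLinearMap

theorem norm_adjoint_comp_self_and_norm_adjoint_general
    {B W Z : Type*}
    [NonUnitalCStarAlgebra B] [PartialOrder B] [StarOrderedRing B]
    [NormedAddCommGroup W] [NormedSpace ℂ W] [SMul Bᵐᵒᵖ W] [RightCStarModule B W]
    [NormedAddCommGroup Z] [NormedSpace ℂ Z] [SMul Bᵐᵒᵖ Z] [RightCStarModule B Z]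
    (X : Submodule ℂ W)
    (Y : Submodule ℂ Z)
    (T : X →L[ℂ] Y) (S : Y →L[ℂ] X)
    (h : ∀ (x : X) (y : Y), ⟪(T x : Z), (y : Z)⟫_B = ⟪(x : W), (S y : W)⟫_B) :
    ‖S.comp T‖ = ‖T‖ ^ 2 ∧ ‖S‖ = ‖T‖ := by
  have hT : ∀ x, ‖T x‖ ^ 2 ≤ ‖x‖ * ‖S (T x)‖ := fun x =>
    RightCStarModule.sq_norm_le_of_inner_self_eq_inner (E := W) (F := Z) (h x (T x))
  have hS : ∀ y, ‖S y‖ ^ 2 ≤ ‖y‖ * ‖T (S y)‖ := fun y => by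
    rw [mul_comm]
    exact RightCStarModule.sq_norm_le_of_inner_self_eq_inner (E := Z) (F := W) (h (S y) y).symm
  have hnorm : ‖S‖ = ‖T‖ := le_antisymm (S.opNorm_le_opNorm_of_sq_norm_apply_le hS)
    (T.opNorm_le_opNorm_of_sq_norm_apply_le hT)
  refine ⟨le_antisymm ?_ (T.sq_opNorm_le_opNorm_comp_of_sq_norm_apply_le hT), hnorm⟩
  calc ‖S.comp T‖ ≤ ‖S‖ * ‖T‖ := S.opNorm_comp_le T
    _ = ‖T‖ ^ 2 := by rw [hnorm, sq]

theorem norm_adjoint_comp_self_and_norm_adjoint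
    {B W Z : Type*}
    [NonUnitalCStarAlgebra B] [PartialOrder B] [StarOrderedRing B]
    [NormedAddCommGroup W] [NormedSpace ℂ W] [SMul Bᵐᵒᵖ W] [RightCStarModule B W]
    [CompleteSpace W]
    [NormedAddCommGroup Z] [NormedSpace ℂ Z] [SMul Bᵐᵒᵖ Z] [RightCStarModule B Z]
    [CompleteSpace Z]
    (X : Submodule ℂ W) (hX : IsClosed (X : Set W))
    (Y : Submodule ℂ Z) (hY : IsClosed (Y : Set Z))
    (hXgen : closure (Submodule.span ℂ
      {w : W | ∃ x ∈ X, ∃ b : B, w = x <• b} : Set W) = Set.univ)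
    (hYgen : closure (Submodule.span ℂ
      {z : Z | ∃ y ∈ Y, ∃ b : B, z = y <• b} : Set Z) = Set.univ)
    (T : X →L[ℂ] Y) (S : Y →L[ℂ] X)
    (h : ∀ (x : X) (y : Y), ⟪(T x : Z), (y : Z)⟫_B = ⟪(x : W), (S y : W)⟫_B) :
    ‖S.comp T‖ = ‖T‖ ^ 2 ∧ ‖S‖ = ‖T‖ :=
  norm_adjoint_comp_self_and_norm_adjoint_general (B := B) X Y T S h
end
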